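/- arXiv:1901.08268 — 4 statements merged into one kernel-verified Lean document; each statement's English description precedes it below -/
import Mathlib

section
/- For α > 0 and β > -1, the right nabla fractional sum satisfies (∇_b^{-α} (b-t)^{\overline{β}}) = (Γ(β+1)/Γ(β+1+α)) · (b-t)^{\overline{α+β}} for t ∈ _{b-1}ℕ. -/
noncomputable def rising (x mu : ℝ) : ℝ :=
  if mu = 0 then 1 else Real.Gamma (x + mu) / Real.Gamma x

/-- Left nabla fractional sum of order `mu` starting at `a`, for a function on
`ℕ_a` represented as a sequence `f : ℕ → ℝ` with `f j = f(a + j)`; the value is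
taken at the point `z = a + n`. By convention the sum of order `0` is the identity. -/
noncomputable def nablaSumL (mu : ℝ) (f : ℕ → ℝ) (n : ℕ) : ℝ :=
  if mu = 0 then f n
  else (1 / Real.Gamma mu) *
    ∑ j ∈ Finset.Icc 1 n, rising ((n : ℝ) - (j : ℝ) + 1) (mu - 1) * f j

/-- Right nabla fractional sum of order `mu` ending at `b`, for a function on
`_bℕ` represented as a sequence `g : ℕ → ℝ` with `g i = g(b - i)`; the value is
taken at the point `z = b - m`. -/
noncomputable def nablaSumR (mu : ℝ) (g : ℕ → ℝ) (m : ℕ) : ℝ :=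
  if mu = 0 then g m
  else (1 / Real.Gamma mu) *
    ∑ i ∈ Finset.Icc 1 m, rising ((m : ℝ) - (i : ℝ) + 1) (mu - 1) * g i

/-
Write `n = m + 1`. At natural arguments the rising factorial is a Pochhammer symbol,
`(j + 1)^{\overline{μ}} = Γ(μ + 1) (μ + 1)_j / j!`, so the fractional sum equals `Γ(β + 1)` times
the convolution `∑_{i + j = m} ((β + 1)_i / i!) ((α)_j / j!)`. By the Chu–Vandermonde identity for
rising factorials this is `(α + β + 1)_m / m!`, which is `(m + 1)^{\overline{α + β}} / Γ(α + β + 1)`.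
-/

open Finset Polynomial

theorem ascPochhammer_eval_add {R : Type*} [CommRing R] (x y : R) (k : ℕ) :
    (ascPochhammer R k).eval (x + y) = ∑ ij ∈ antidiagonal k,
      (k.choose ij.1 : R) * ((ascPochhammer R ij.1).eval x * (ascPochhammer R ij.2).eval y) := by
  have hasc (r : R) (n : ℕ) :
      (ascPochhammer R n).eval r = (-1) ^ n * (descPochhammer ℤ n).smeval (-r) := by
    rw [← aeval_eq_smeval, ← eval_map_algebraMap, descPochhammer_map,
      ← ascPochhammer_eval_neg_eq_descPochhammer, neg_neg]
  rw [hasc, neg_add, Ring.descPochhammer_smeval_add _ (Commute.all _ _), mul_sum]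
  refine sum_congr rfl fun ij hij => ?_
  rw [hasc x, hasc y, ← mem_antidiagonal.mp hij, pow_add]
  ring

theorem ascPochhammer_eval_add_div_factorial {K : Type*} [Field K] [CharZero K]
    (x y : K) (k : ℕ) :
    (ascPochhammer K k).eval (x + y) / k.factorial = ∑ ij ∈ antidiagonal k,
      (ascPochhammer K ij.1).eval x / ij.1.factorial *
        ((ascPochhammer K ij.2).eval y / ij.2.factorial) := by
  rw [ascPochhammer_eval_add, sum_div]
  refine sum_congr rfl fun ij hij => ?_
  obtain rfl := mem_antidiagonal.mp hij
  have : ((ij.1 + ij.2).factorial : K) ≠ 0 := Nat.cast_ne_zero.mpr (Nat.factorial_ne_zero _)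
  rw [Nat.cast_add_choose]
  field_simp

theorem Real.Gamma_add_natCast {x : ℝ} (hx : ∀ k : ℕ, x ≠ -k) (n : ℕ) :
    Real.Gamma (x + n) = Real.Gamma x * (ascPochhammer ℝ n).eval x := by
  induction n with
  | zero => simp
  | succ n ih =>
    have hxn : x + n ≠ 0 := fun h => hx n (eq_neg_of_add_eq_zero_left h)
    rw [Nat.cast_succ, ← add_assoc, Real.Gamma_add_one hxn, ih, ascPochhammer_succ_eval]
    ring

theorem ne_neg_natCast_of_pos {x : ℝ} (hx : 0 < x) (k : ℕ) : x ≠ -k := by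
  have := k.cast_nonneg (α := ℝ)
  linarith

theorem rising_natCast_add_one {μ : ℝ} (hμ : ∀ k : ℕ, μ + 1 ≠ -k) (n : ℕ) :
    rising (n + 1) μ
      = Real.Gamma (μ + 1) * ((ascPochhammer ℝ n).eval (μ + 1) / n.factorial) := by
  rcases eq_or_ne μ 0 with rfl | hμ0
  · have : (n.factorial : ℝ) ≠ 0 := by positivity
    simp [rising, ascPochhammer_eval_one, this]
  · rw [rising, if_neg hμ0, show (n : ℝ) + 1 + μ = μ + 1 + n by ring,
      Real.Gamma_add_natCast hμ, Real.Gamma_nat_eq_factorial, mul_div_assoc]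

theorem nablaSumR_succ_eq_sum_antidiagonal {μ : ℝ} (hμ : μ ≠ 0) (g : ℕ → ℝ) (m : ℕ) :
    nablaSumR μ g (m + 1) = (1 / Real.Gamma μ) *
      ∑ ij ∈ antidiagonal m, rising (ij.2 + 1) (μ - 1) * g (ij.1 + 1) := by
  rw [nablaSumR, if_neg hμ, ← Ico_add_one_right_eq_Icc, sum_Ico_eq_sum_range,
    Nat.sum_antidiagonal_eq_sum_range_succ_mk]
  refine congrArg _ (sum_congr rfl fun k hk => ?_)
  have hkm : k ≤ m := Nat.lt_succ_iff.mp (mem_range.mp hk)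
  push_cast [Nat.cast_sub hkm]
  ring_nf

/-- Power rule for the right nabla fractional sum: for `α > 0`, `β > -1`, and
`t = b - n ∈ _{b-1}ℕ`, one has
`(∇_b^{-α}(b-·)^β‾)(t) = (Γ(β+1)/Γ(β+1+α)) (b-t)^(α+β)‾`.
The function `s ↦ (b-s)^β‾` on `_bℕ` is the sequence `i ↦ i^β‾`, and `b - t = n`. -/
theorem nablaSumR_rising (α β : ℝ) (hα : 0 < α) (hβ : -1 < β) (n : ℕ) (hn : 1 ≤ n) :
    nablaSumR α (fun i => rising (i : ℝ) β) n
      = (Real.Gamma (β + 1) / Real.Gamma (β + 1 + α)) * rising (n : ℝ) (α + β) := by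
  obtain ⟨m, rfl⟩ := Nat.exists_eq_add_of_le' hn
  have hΓα : Real.Gamma α ≠ 0 := (Real.Gamma_pos_of_pos hα).ne'
  have hΓαβ : Real.Gamma (β + 1 + α) ≠ 0 := (Real.Gamma_pos_of_pos (by linarith)).ne'
  have hα' : ∀ k : ℕ, α - 1 + 1 ≠ -k := by
    rw [sub_add_cancel]
    exact ne_neg_natCast_of_pos hα
  have hβ' : ∀ k : ℕ, β + 1 ≠ -k := ne_neg_natCast_of_pos (by linarith)
  have hαβ : ∀ k : ℕ, α + β + 1 ≠ -k := ne_neg_natCast_of_pos (by linarith)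
  rw [nablaSumR_succ_eq_sum_antidiagonal hα.ne']
  simp only [Nat.cast_add_one, rising_natCast_add_one hα', rising_natCast_add_one hβ',
    rising_natCast_add_one hαβ, sub_add_cancel]
  calc
    _ = Real.Gamma (β + 1) * ((ascPochhammer ℝ m).eval (β + 1 + α) / m.factorial) := by
      rw [ascPochhammer_eval_add_div_factorial, mul_sum, mul_sum]
      refine sum_congr rfl fun ij _ => ?_
      field_simp
    _ = _ := by
      rw [show α + β + 1 = β + 1 + α by ring]
      field_simp
end

section
/- For ν > 0 and a function f on ℕ_a, the nabla discrete Laplace transform of the left fractional sum satisfies (K_a(ₐ∇^{-ν}f))(s) = s^{-ν}·(K_a f)(s), assuming convergence. -/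
/-!
The left fractional sum is a convolution: `ₐ∇^{-ν}f (a + n + 1) = ∑_{k + m = n} c_k f(a + m + 1)`
with `c_k = Γ(ν + k) / (Γ(ν) k!) = (ν + k - 1).choose k`, the Taylor coefficients of
`(1 - x)^{-ν}`. The transform in the variable `x = 1 - s` turns this convolution into the
Cauchy product of the two power series, and the series of `c_k` sums to `(1 - x)^{-ν} = s^{-ν}`.
-/

open Finset

theorem Ring.choose_add_nat_sub_one (a : ℝ) (k : ℕ) :
    Ring.choose (a + k - 1) k = (ascPochhammer ℝ k).eval a / k.factorial := by
  rw [Ring.choose_eq_smul, Polynomial.descPochhammer_smeval_eq_ascPochhammer,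
    Polynomial.ascPochhammer_smeval_eq_eval, smul_eq_mul, inv_mul_eq_div]
  ring_nf

theorem Real.Gamma_add_nat {s : ℝ} (hs : ∀ n : ℕ, s ≠ -n) (k : ℕ) :
    Real.Gamma (s + k) = (ascPochhammer ℝ k).eval s * Real.Gamma s := by
  induction k with
  | zero => simp
  | succ k ih =>
    have : s + k ≠ 0 := fun h => hs k (by linarith)
    rw [Nat.cast_succ, ← add_assoc, Real.Gamma_add_one this, ih, ascPochhammer_succ_right,
      Polynomial.eval_mul]
    simp only [Polynomial.eval_add, Polynomial.eval_X, Polynomial.eval_natCast]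
    ring

theorem Ring.choose_add_nat_sub_one_eq_Gamma_div {a : ℝ} (ha : ∀ n : ℕ, a ≠ -n) (k : ℕ) :
    Ring.choose (a + k - 1) k = Real.Gamma (a + k) / (k.factorial * Real.Gamma a) := by
  rw [Ring.choose_add_nat_sub_one, Real.Gamma_add_nat ha,
    mul_div_mul_right _ _ (Real.Gamma_ne_zero ha)]

theorem rising_eq_Gamma_div {x : ℝ} (hx : Real.Gamma x ≠ 0) (mu : ℝ) :
    rising x mu = Real.Gamma (x + mu) / Real.Gamma x := by
  rw [rising]
  split_ifs with h
  · rw [h, add_zero, div_self hx]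
  · rfl

theorem inv_Gamma_mul_rising_nat_add_one {ν : ℝ} (hν : ∀ n : ℕ, ν ≠ -n) (k : ℕ) :
    1 / Real.Gamma ν * rising ((k : ℝ) + 1) (ν - 1) = Ring.choose (ν + k - 1) k := by
  rw [rising_eq_Gamma_div (Real.Gamma_pos_of_pos k.cast_add_one_pos).ne',
    Real.Gamma_nat_eq_factorial, Ring.choose_add_nat_sub_one_eq_Gamma_div hν]
  ring_nf

theorem nablaSumL_succ_eq_sum_antidiagonal {ν : ℝ} (hν : ∀ n : ℕ, ν ≠ -n) (f : ℕ → ℝ) (n : ℕ) :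
    nablaSumL ν f (n + 1) = ∑ p ∈ antidiagonal n, Ring.choose (ν + p.1 - 1) p.1 * f (p.2 + 1) := by
  rw [nablaSumL, if_neg (by simpa using hν 0), Nat.sum_antidiagonal_eq_sum_range_succ
    (fun i j => Ring.choose (ν + i - 1) i * f (j + 1)), mul_sum]
  refine sum_nbij' (fun j => n + 1 - j) (fun k => n + 1 - k)
    (fun j hj => by rw [mem_Icc] at hj; rw [mem_range]; omega)
    (fun k hk => by rw [mem_range] at hk; rw [mem_Icc]; omega)
    (fun j hj => by rw [mem_Icc] at hj; omega) (fun k hk => by rw [mem_range] at hk; omega)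
    fun j hj => ?_
  obtain ⟨hj_pos, hj_le⟩ := mem_Icc.mp hj
  rw [← mul_assoc, show n - (n + 1 - j) + 1 = j by omega, ← inv_Gamma_mul_rising_nat_add_one hν,
    Nat.cast_sub hj_le]

theorem Real.hasSum_choose_mul_pow (a : ℝ) {x : ℝ} (hx : |x| < 1) :
    HasSum (fun k : ℕ => Ring.choose (a + k - 1) k * x ^ k) ((1 - x) ^ (-a)) := by
  have h := (Real.one_div_one_sub_rpow_hasFPowerSeriesOnBall_zero a).hasSum
    (y := x) (by simpa [enorm_eq_nnnorm, ← NNReal.coe_lt_coe] using hx)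
  rw [Real.rpow_neg (by linarith [abs_lt.mp hx]), ← one_div, ← zero_add x]
  simpa [FormalMultilinearSeries.ofScalars_apply_eq, mul_comm] using h

theorem Real.summable_norm_choose_mul_pow (a : ℝ) {x : ℝ} (hx : |x| < 1) :
    Summable (fun k : ℕ => ‖Ring.choose (a + k - 1) k * x ^ k‖) := by
  have h := Real.one_div_one_sub_rpow_hasFPowerSeriesOnBall_zero a
  have := FormalMultilinearSeries.summable_norm_apply _ (x := x)
    (lt_of_lt_of_le (by simpa [enorm_eq_nnnorm, ← NNReal.coe_lt_coe] using hx) h.r_le)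
  simpa [FormalMultilinearSeries.ofScalars_apply_eq, mul_comm] using this

theorem laplace_nablaSumL_general (ν s : ℝ) (f : ℕ → ℝ) (hν : 0 < ν) (hs : |1 - s| < 1)
    (hf : Summable (fun n : ℕ => |(1 - s) ^ n * f (n + 1)|)) :
    (∑' n : ℕ, (1 - s) ^ n * nablaSumL ν f (n + 1))
      = s ^ (-ν) * ∑' n : ℕ, (1 - s) ^ n * f (n + 1) := by
  have hν' : ∀ n : ℕ, ν ≠ -n := fun n h => by linarith [n.cast_nonneg (α := ℝ)]
  have hkernel : ∑' k : ℕ, Ring.choose (ν + k - 1) k * (1 - s) ^ k = s ^ (-ν) := by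
    simpa using (Real.hasSum_choose_mul_pow ν hs).tsum_eq
  rw [← hkernel, tsum_mul_tsum_eq_tsum_sum_antidiagonal_of_summable_norm
    (Real.summable_norm_choose_mul_pow ν hs) (by simpa using hf)]
  refine tsum_congr fun n => ?_
  rw [nablaSumL_succ_eq_sum_antidiagonal hν', mul_sum]
  refine sum_congr rfl fun p hp => ?_
  rw [← mem_antidiagonal.mp hp, pow_add]
  ring

/-- The nabla discrete Laplace transform of the left fractional sum:
`(K_a(ₐ∇^{-ν}f))(s) = s^{-ν} (K_a f)(s)`, assuming convergence. -/
theorem laplace_nablaSumL (ν s : ℝ) (f : ℕ → ℝ) (hν : 0 < ν) (hs : |1 - s| < 1)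
    (hf : Summable (fun n : ℕ => |(1 - s) ^ n * f (n + 1)|))
    (hF : Summable (fun n : ℕ => |(1 - s) ^ n * nablaSumL ν f (n + 1)|)) :
    (∑' n : ℕ, (1 - s) ^ n * nablaSumL ν f (n + 1))
      = s ^ (-ν) * ∑' n : ℕ, (1 - s) ^ n * f (n + 1) :=
  laplace_nablaSumL_general ν s f hν hs hf
end

section
/- The summation of the two-parameter discrete Mittag-Leffler function satisfies ∑_{t=a+1}^{v} E_{\overline{α,β}}(λ, t-a) = E_{\overline{α,β+1}}(λ, v-a). -/
/-- One-parameter nabla discrete Mittag-Leffler function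
`E_α‾(λ, v) = ∑_{k} λ^k v^{kα}‾ / Γ(kα+1)`. -/
noncomputable def mlOne (α lam v : ℝ) : ℝ :=
  ∑' k : ℕ, lam ^ k * rising v ((k : ℝ) * α) / Real.Gamma ((k : ℝ) * α + 1)

/-- Two-parameter nabla discrete Mittag-Leffler function
`E_{α,β}‾(λ, v) = ∑_{k} λ^k v^(kα+β-1)‾ / Γ(kα+β)`. -/
noncomputable def mlTwo (α β lam v : ℝ) : ℝ :=
  ∑' k : ℕ, lam ^ k * rising v ((k : ℝ) * α + β - 1) / Real.Gamma ((k : ℝ) * α + β)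


/-! The nabla difference of `t ↦ t^{\overline{μ}}` is `μ t^{\overline{μ-1}}`, so for each `k`
the sum over `t` of the `k`-th term of `E_{\overline{α,β}}(λ, t - a)` telescopes, and
`Γ(μ + 1) = μ Γ(μ)` turns the result into the `k`-th term of `E_{\overline{α,β+1}}(λ, v - a)`.
The finite sum commutes with the series because, for fixed `t`, the `k`-th term is bounded by a
polynomial in `k` times `|λ|^k`. -/

open Finset

lemma rising_of_pos {x : ℝ} (hx : 0 < x) (μ : ℝ) :
    rising x μ = Real.Gamma (x + μ) / Real.Gamma x := by
  unfold rising
  split_ifs with hμ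
  · rw [hμ, add_zero, div_self (Real.Gamma_pos_of_pos hx).ne']
  · rfl

-- Mathlib's `Real.Gamma 0 = 0` plays the role of `1 / Γ(0) = 0`.
lemma rising_zero_left {μ : ℝ} (hμ : μ ≠ 0) : rising 0 μ = 0 := by
  simp [rising, hμ]

lemma rising_add_one_sub_rising {x : ℝ} (hx : 0 ≤ x) {μ : ℝ} (hμ : 0 < μ) :
    rising (x + 1) μ - rising x μ = μ * rising (x + 1) (μ - 1) := by
  rw [rising_of_pos (by linarith) μ, rising_of_pos (by linarith) (μ - 1),
    show x + 1 + (μ - 1) = x + μ by ring]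
  rcases hx.eq_or_lt with rfl | hx
  · rw [rising_zero_left hμ.ne', zero_add, zero_add, Real.Gamma_one, add_comm 1 μ,
      Real.Gamma_add_one hμ.ne']
    ring
  · rw [show x + 1 + μ = (x + μ) + 1 by ring, Real.Gamma_add_one (by linarith),
      Real.Gamma_add_one hx.ne', rising_of_pos hx]
    have := (Real.Gamma_pos_of_pos hx).ne'
    field_simp
    ring

lemma sum_Icc_rising_sub_one_div_Gamma {μ : ℝ} (hμ : 0 < μ) (n : ℕ) :
    ∑ j ∈ Icc 1 n, rising j (μ - 1) / Real.Gamma μ = rising n μ / Real.Gamma (μ + 1) := by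
  induction n with
  | zero => simp [rising_zero_left hμ.ne']
  | succ n ih =>
    have hstep := rising_add_one_sub_rising (Nat.cast_nonneg n) hμ
    push_cast
    rw [sum_Icc_succ_top (by omega), ih, Nat.cast_succ, Real.Gamma_add_one hμ.ne',
      sub_eq_iff_eq_add'.mp hstep]
    have := (Real.Gamma_pos_of_pos hμ).ne'
    field_simp

lemma Gamma_add_nat_le {μ : ℝ} (hμ : 0 < μ) (d : ℕ) :
    Real.Gamma (μ + d) ≤ (μ + d) ^ d * Real.Gamma μ := by
  induction d with
  | zero => simp
  | succ d ih =>
    push_cast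
    rw [← add_assoc, Real.Gamma_add_one (by positivity), pow_succ', mul_assoc]
    have := (Real.Gamma_pos_of_pos hμ).le
    calc (μ + d) * Real.Gamma (μ + d) ≤ (μ + d) * ((μ + d) ^ d * Real.Gamma μ) := by
          gcongr
      _ ≤ (μ + d + 1) * ((μ + d + 1) ^ d * Real.Gamma μ) := by
          gcongr ?_ * (?_ ^ d * _) <;> linarith

lemma summable_affine_pow_mul_geometric (a b : ℝ) (d : ℕ) {r : ℝ} (hr : |r| < 1) :
    Summable fun k : ℕ => (a * k + b) ^ d * r ^ k := by
  have hr' : ‖r‖ < 1 := by rwa [Real.norm_eq_abs]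
  have hterms : Summable fun k : ℕ => ∑ m ∈ range (d + 1),
      a ^ m * b ^ (d - m) * d.choose m * ((k : ℝ) ^ m * r ^ k) :=
    summable_sum fun m _ => (summable_pow_mul_geometric_of_norm_lt_one m hr').mul_left _
  refine hterms.congr fun k => ?_
  rw [add_pow, sum_mul]
  exact sum_congr rfl fun m _ => by ring

lemma rising_nat_succ_div_Gamma_le {μ : ℝ} (hμ : 0 < μ) (d : ℕ) :
    rising (d + 1) (μ - 1) / Real.Gamma μ ≤ (μ + d) ^ d / Real.Gamma (d + 1) := by
  rw [rising_of_pos (by positivity), show (d : ℝ) + 1 + (μ - 1) = μ + d by ring,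
    div_div, mul_comm, ← div_div]
  gcongr
  rw [div_le_iff₀ (Real.Gamma_pos_of_pos hμ)]
  exact Gamma_add_nat_le hμ d

lemma summable_mlTwo_terms {α β lam : ℝ} (hα : 0 ≤ α) (hβ : 0 < β) (hlam : |lam| < 1)
    {j : ℕ} (hj : 1 ≤ j) :
    Summable fun k : ℕ =>
      lam ^ k * rising j ((k : ℝ) * α + β - 1) / Real.Gamma ((k : ℝ) * α + β) := by
  obtain ⟨d, rfl⟩ := Nat.exists_eq_add_of_le' hj
  have hbound := (summable_affine_pow_mul_geometric α (β + d) d (abs_abs lam ▸ hlam)).div_const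
    (Real.Gamma (d + 1))
  refine Summable.of_norm_bounded hbound fun k => ?_
  have hμ : 0 < (k : ℝ) * α + β := by positivity
  have hnonneg : 0 ≤ rising (d + 1) ((k : ℝ) * α + β - 1) / Real.Gamma ((k : ℝ) * α + β) := by
    rw [rising_of_pos (by positivity)]
    have := Real.Gamma_pos_of_pos hμ
    have := Real.Gamma_pos_of_pos (show (0 : ℝ) < d + 1 + ((k : ℝ) * α + β - 1) by linarith)
    positivity
  calc ‖lam ^ k * rising ((d + 1 : ℕ) : ℝ) ((k : ℝ) * α + β - 1) / Real.Gamma ((k : ℝ) * α + β)‖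
      = |lam| ^ k * (rising (d + 1) ((k : ℝ) * α + β - 1) / Real.Gamma ((k : ℝ) * α + β)) := by
        rw [mul_div_assoc, norm_mul, norm_pow, Real.norm_eq_abs, Nat.cast_succ,
          Real.norm_of_nonneg hnonneg]
    _ ≤ |lam| ^ k * (((k : ℝ) * α + β + d) ^ d / Real.Gamma (d + 1)) := by
        gcongr ?_ * ?_
        exact rising_nat_succ_div_Gamma_le hμ d
    _ = (α * k + (β + d)) ^ d * |lam| ^ k / Real.Gamma (d + 1) := by ring

/-- Summation of the two-parameter discrete Mittag-Leffler function:
`∑_{t=a+1}^{v} E_{α,β}‾(λ, t-a) = E_{α,β+1}‾(λ, v-a)`, where `t - a = j` and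
`v - a = n`. -/
theorem sum_mlTwo (α β lam : ℝ) (hα : 0 < α) (hβ : 0 < β) (hlam : |lam| < 1) (n : ℕ) :
    (∑ j ∈ Finset.Icc 1 n, mlTwo α β lam (j : ℝ)) = mlTwo α (β + 1) lam (n : ℝ) := by
  unfold mlTwo
  rw [← Summable.tsum_finsetSum fun j hj =>
    summable_mlTwo_terms hα.le hβ hlam (mem_Icc.mp hj).1]
  refine tsum_congr fun k => ?_
  have hμ : 0 < (k : ℝ) * α + β := by positivity
  simp only [mul_div_assoc, ← mul_sum, sum_Icc_rising_sub_one_div_Gamma hμ, ← add_assoc,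
    add_sub_cancel_right]
end

section
/- For n ∈ ℕ and α ∈ [0,1], the n-th iterate of the AB left fractional sum satisfies (ᴬᴮₐ∇^{-α})^n f(t) = ∑_{k=0}^{n} [C(n,k)(1-α)^{n-k} α^k / B(α)^n] · (ₐ∇^{-kα} f)(t), where C(n,k) is the binomial coefficient. -/
/-- The AB left fractional sum `(ᴬᴮₐ∇^{-α}f)(t) = ((1-α)/B) f(t) + (α/B)(ₐ∇^{-α}f)(t)`. -/
noncomputable def ABsum (B α : ℝ) (f : ℕ → ℝ) (t : ℕ) : ℝ :=
  (1 - α) / B * f t + α / B * nablaSumL α f t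

/-!
`ABsum B α = B⁻¹ • ((1 - α) • id + α • N)` with `N = ₐ∇^{-α}` a linear operator, so the iterate
is expanded by the binomial theorem, and `N ^ k = ₐ∇^{-kα}` by the semigroup property. The
latter holds because the weights of `ₐ∇^{-μ}` are `Γ(m + μ) / (Γ(μ) m!)`, the coefficients of
`(1 - X) ^ (-μ)`: composing two sums multiplies their generating series, and
`(1 - X) ^ (-α) * (1 - X) ^ (-μ) = (1 - X) ^ (-(α + μ))`.
-/

open Finset PowerSeries
open scoped Nat

theorem Real.Gamma_add_nat_eq_mul_ascPochhammer {μ : ℝ} (hμ : 0 < μ) (m : ℕ) :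
    Real.Gamma (μ + m) = Real.Gamma μ * (ascPochhammer ℝ m).eval μ := by
  induction m with
  | zero => simp
  | succ m ih =>
    rw [Nat.cast_succ, ← add_assoc, Real.Gamma_add_one (by positivity), ih,
      ascPochhammer_succ_eval]
    ring

theorem rising_natCast_add_one_s15 {μ : ℝ} (hμ : 0 < μ) (m : ℕ) :
    rising ((m : ℝ) + 1) (μ - 1) = Real.Gamma μ * Ring.multichoose μ m := by
  have hfac : (m ! : ℝ) ≠ 0 := by positivity
  have hmul : (m ! : ℝ) * Ring.multichoose μ m = (ascPochhammer ℝ m).eval μ := by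
    rw [← nsmul_eq_mul, Ring.factorial_nsmul_multichoose_eq_ascPochhammer,
      Polynomial.ascPochhammer_smeval_eq_eval]
  rw [rising, Real.Gamma_nat_eq_factorial, show (m : ℝ) + 1 + (μ - 1) = μ + m by ring,
    Real.Gamma_add_nat_eq_mul_ascPochhammer hμ, ← hmul]
  split_ifs with h
  · obtain rfl : μ = 1 := by linarith
    simp [Ring.multichoose_one]
  · field_simp

/-- The formal power series `(1 - X) ^ (-μ)`. -/
noncomputable def nablaKernel (μ : ℝ) : PowerSeries ℝ :=
  rescale (-1) (binomialSeries ℝ (-μ))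

theorem coeff_nablaKernel (μ : ℝ) (m : ℕ) : coeff m (nablaKernel μ) = Ring.multichoose μ m := by
  rw [nablaKernel, coeff_rescale, binomialSeries_coeff, Ring.choose_neg, Ring.multichoose_eq,
    smul_eq_mul, mul_one, Units.smul_def, zsmul_eq_mul, Int.cast_negOnePow_natCast, ← mul_assoc,
    ← mul_pow]
  simp

theorem nablaKernel_add (α μ : ℝ) : nablaKernel (α + μ) = nablaKernel α * nablaKernel μ := by
  rw [nablaKernel, neg_add, binomialSeries_add, map_mul]
  rfl

theorem nablaSumL_zero (f : ℕ → ℝ) : nablaSumL 0 f = f :=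
  funext fun _ => if_pos rfl

theorem nablaSumL_apply_zero {μ : ℝ} (hμ : μ ≠ 0) (f : ℕ → ℝ) : nablaSumL μ f 0 = 0 := by
  simp [nablaSumL, hμ]

theorem nablaSumL_eq_sum_multichoose {μ : ℝ} (hμ : 0 < μ) (f : ℕ → ℝ) (n : ℕ) :
    nablaSumL μ f n = ∑ j ∈ Icc 1 n, Ring.multichoose μ (n - j) * f j := by
  rw [nablaSumL, if_neg hμ.ne', mul_sum]
  refine sum_congr rfl fun j hj => ?_
  rw [← Nat.cast_sub (mem_Icc.mp hj).2, rising_natCast_add_one_s15 hμ]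
  field_simp [(Real.Gamma_pos_of_pos hμ).ne']

theorem mk_nablaSumL {μ : ℝ} (hμ : 0 < μ) (f : ℕ → ℝ) :
    mk (nablaSumL μ f) = nablaKernel μ * mk (Function.update f 0 0) := by
  -- `nablaSumL μ f` never reads `f 0`: the sum starts at `a + 1`.
  ext n
  rw [coeff_mk, coeff_mul, Nat.antidiagonal_eq_map', sum_map, nablaSumL_eq_sum_multichoose hμ]
  simp only [coeff_nablaKernel, coeff_mk]
  calc ∑ j ∈ Icc 1 n, Ring.multichoose μ (n - j) * f j
      = ∑ j ∈ Icc 1 n, Ring.multichoose μ (n - j) * Function.update f 0 0 j :=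
        sum_congr rfl fun j hj => by
          rw [Function.update_of_ne (by have := (mem_Icc.mp hj).1; omega)]
    _ = _ := sum_subset (fun j hj => by simp at hj ⊢; omega) fun j hj hj' => by
        obtain rfl : j = 0 := by simp at hj hj'; omega
        simp

theorem nablaSumL_nablaSumL {α μ : ℝ} (hα : 0 ≤ α) (hμ : 0 ≤ μ) (f : ℕ → ℝ) :
    nablaSumL α (nablaSumL μ f) = nablaSumL (α + μ) f := by
  rcases hα.eq_or_lt with rfl | hα
  · simp [nablaSumL_zero]
  rcases hμ.eq_or_lt with rfl | hμ
  · simp [nablaSumL_zero]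
  have hvanish : Function.update (nablaSumL μ f) 0 0 = nablaSumL μ f := by
    rw [← nablaSumL_apply_zero hμ.ne' f, Function.update_eq_self]
  have h : mk (nablaSumL α (nablaSumL μ f)) = mk (nablaSumL (α + μ) f) := by
    rw [mk_nablaSumL hα, hvanish, mk_nablaSumL hμ, mk_nablaSumL (by positivity), nablaKernel_add,
      mul_assoc]
  funext n
  simpa using congrArg (coeff n) h

noncomputable def nablaSumLₗ (μ : ℝ) : Module.End ℝ (ℕ → ℝ) where
  toFun := nablaSumL μ
  map_add' f g := by
    ext n
    unfold nablaSumL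
    split_ifs <;> simp [mul_add, sum_add_distrib]
  map_smul' c f := by
    ext n
    unfold nablaSumL
    split_ifs <;> simp [mul_sum, mul_left_comm]

theorem coe_nablaSumLₗ_pow {α : ℝ} (hα : 0 ≤ α) (k : ℕ) :
    ⇑(nablaSumLₗ α ^ k) = nablaSumL (k * α) := by
  induction k with
  | zero =>
    funext f
    rw [pow_zero, Module.End.one_apply, Nat.cast_zero, zero_mul, nablaSumL_zero]
  | succ k ih =>
    funext f
    rw [pow_succ', Module.End.mul_apply, ih]
    change nablaSumL α (nablaSumL (k * α) f) = _
    rw [nablaSumL_nablaSumL hα (by positivity), Nat.cast_succ, add_one_mul, add_comm]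

theorem ABsum_eq_smul (B α : ℝ) :
    ABsum B α = ⇑(B⁻¹ • ((1 - α) • 1 + α • nablaSumLₗ α)) := by
  funext f t
  simp only [ABsum, nablaSumLₗ, smul_add, LinearMap.add_apply, LinearMap.smul_apply,
    Module.End.one_apply, LinearMap.coe_mk, AddHom.coe_mk, Pi.add_apply, Pi.smul_apply, smul_eq_mul]
  ring

theorem ABsum_iterate_general (B α : ℝ) (hα : α ∈ Set.Icc (0:ℝ) 1)
    (n : ℕ) (f : ℕ → ℝ) (t : ℕ) :
    (ABsum B α)^[n] f t
      = ∑ k ∈ Finset.range (n + 1),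
          ((n.choose k : ℝ) * (1 - α) ^ (n - k) * α ^ k / B ^ n) *
            nablaSumL ((k : ℝ) * α) f t := by
  have hcomm : Commute (α • nablaSumLₗ α) ((1 - α) • (1 : Module.End ℝ (ℕ → ℝ))) :=
    ((Commute.one_right _).smul_right _).smul_left _
  rw [ABsum_eq_smul, ← Module.End.coe_pow, smul_pow, add_comm, hcomm.add_pow]
  simp only [← nsmul_eq_mul']
  simp only [inv_pow, smul_pow, one_pow, Algebra.mul_smul_comm, mul_one, nsmul_eq_mul,
    LinearMap.smul_apply, LinearMap.coe_sum, LinearMap.coe_smul, Finset.sum_apply, Pi.smul_apply,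
    Module.End.mul_apply, coe_nablaSumLₗ_pow hα.1, Module.End.natCast_apply, Pi.mul_apply,
    Pi.natCast_apply, smul_eq_mul, mul_sum]
  exact sum_congr rfl fun k _ => by ring

/-- The `n`-th iterate of the AB left fractional sum satisfies
`(ᴬᴮₐ∇^{-α})^n f(t) = ∑_{k=0}^{n} [C(n,k)(1-α)^{n-k} α^k / B^n] (ₐ∇^{-kα}f)(t)`. -/
theorem ABsum_iterate (B α : ℝ) (hB : 0 < B) (hα : α ∈ Set.Icc (0:ℝ) 1)
    (n : ℕ) (f : ℕ → ℝ) (t : ℕ) :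
    (ABsum B α)^[n] f t
      = ∑ k ∈ Finset.range (n + 1),
          ((n.choose k : ℝ) * (1 - α) ^ (n - k) * α ^ k / B ^ n) *
            nablaSumL ((k : ℝ) * α) f t :=
  ABsum_iterate_general B α hα n f t
end
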